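/- arXiv:2507.03894 — 2 statements merged into one kernel-verified Lean document; each statement's English description precedes it below -/
import Mathlib

section
/- For a parameter ν ≥ 0 define φ_ν(x) = (ν²/8)(x−1) + (ν/2)·√((ν²/16)(x−1)² + x). Let σ_i, σ_j > 0, let p, p′ > 0 and d ≥ 0 satisfy p + p′ + d = 1, d = ν·√(p·p′), and (p + d/2)·σ_j = (p′ + d/2)·σ_i. Then p = (σ_i/(σ_i + σ_j)) · 1/(1 + φ_ν(σ_j/σ_i)). -/
noncomputable def φ (ν x : ℝ) : ℝ :=
  (ν ^ 2 / 8) * (x - 1) + (ν / 2) * Real.sqrt ((ν ^ 2 / 16) * (x - 1) ^ 2 + x)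

/-- In the Alternative model, the win probability is expressed in terms of the
strength parameters via φ_ν. -/
theorem alternative_win_probability (ν : ℝ) (hν : 0 ≤ ν) (σi σj : ℝ)
    (hσi : 0 < σi) (hσj : 0 < σj) (p p' d : ℝ) (hp : 0 < p) (hp' : 0 < p')
    (hd : 0 ≤ d) (hsum : p + p' + d = 1) (hdraw : d = ν * Real.sqrt (p * p'))
    (hratio : (p + d / 2) * σj = (p' + d / 2) * σi) :
    p = (σi / (σi + σj)) * (1 / (1 + φ ν (σj / σi))) := by
  set x := σj / σi with hxdef
  have hx0 : 0 < x := div_pos hσj hσi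
  clear_value x
  set s := Real.sqrt (p * p') with hsdef
  have hs2 : s ^ 2 = p * p' := Real.sq_sqrt (by positivity)
  have hs0 : 0 < s := Real.sqrt_pos.mpr (by positivity)
  have hds : d = ν * s := hdraw
  clear_value s
  have hpd : 0 < p + d / 2 := by linarith
  have hr : x * (p + d / 2) = p' + d / 2 := by
    rw [hxdef]
    field_simp
    linarith [hratio]
  have hx1 : x - 1 = (p' - p) / (p + d / 2) := by
    field_simp
    linarith [hr]
  have hA : 0 ≤ s / p - (ν / 4) * (x - 1) := by
    have key : s / p - (ν / 4) * (x - 1)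
        = (s * (p + d / 2) - (ν / 4) * p * (p' - p)) / (p * (p + d / 2)) := by
      rw [hx1]; field_simp
    have heq : s * (p + d / 2) - (ν / 4) * p * (p' - p)
        = s * p + (ν / 4) * s ^ 2 + (ν / 4) * p ^ 2 := by
      rw [hds]; linear_combination (ν / 4) * hs2
    rw [key, heq]
    positivity
  have hsq : (ν ^ 2 / 16) * (x - 1) ^ 2 + x = (s / p - (ν / 4) * (x - 1)) ^ 2 := by
    have hr' : x * (p + ν * s / 2) = p' + ν * s / 2 := by rw [← hds]; exact hr
    have hpx : p ^ 2 * x = s ^ 2 - (ν / 2) * s * p * (x - 1) := by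
      linear_combination p * hr' - hs2
    field_simp
    linear_combination 256 * hpx
  have hφ : φ ν x = d / (2 * p) := by
    rw [φ, hsq, Real.sqrt_sq hA, hds]
    field_simp
    ring
  have hone' : (2 * p + d) * (σi + σj) = 2 * σi := by
    linear_combination 2 * hratio + 2 * σi * hsum
  rw [hφ]
  have h2pd : 0 < 2 * p + d := by linarith
  have e1 : 1 + d / (2 * p) = (2 * p + d) / (2 * p) := by field_simp
  rw [e1, one_div_div, div_mul_div_comm,
    eq_div_iff (ne_of_gt (mul_pos (by linarith) h2pd))]
  linear_combination p * hone'
end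

section
/- For a parameter ν > 0 define φ_ν(x) = (ν²/8)(x−1) + (ν/2)·√((ν²/16)(x−1)² + x). Let σ_i, σ_j > 0, let p, p′ > 0 and d ≥ 0 satisfy p + p′ + d = 1, d = ν·√(p·p′), and (p + d/2)·σ_j = (p′ + d/2)·σ_i. Then √(p′/p) = (2/ν)·φ_ν(σ_j/σ_i). -/
/-- In the Alternative model, √(p′/p) = (2/ν)·φ_ν(σ_j/σ_i). -/
theorem alternative_sqrt_ratio (ν : ℝ) (hν : 0 < ν) (σi σj : ℝ)
    (hσi : 0 < σi) (hσj : 0 < σj) (p p' d : ℝ) (hp : 0 < p) (hp' : 0 < p')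
    (hd : 0 ≤ d) (hsum : p + p' + d = 1) (hdraw : d = ν * Real.sqrt (p * p'))
    (hratio : (p + d / 2) * σj = (p' + d / 2) * σi) :
    Real.sqrt (p' / p) = (2 / ν) * φ ν (σj / σi) := by
  set s := σj / σi with hs
  set t := Real.sqrt (p' / p) with ht
  have hpne : p ≠ 0 := hp.ne'
  have ht0 : 0 < t := Real.sqrt_pos.mpr (div_pos hp' hp)
  have ht2 : t ^ 2 = p' / p := Real.sq_sqrt (by positivity)
  have hs0 : 0 < s := div_pos hσj hσi
  clear_value s t
  have hsqpp : Real.sqrt (p * p') = p * t := by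
    have h1 : p * p' = p ^ 2 * (p' / p) := by field_simp
    rw [h1, Real.sqrt_mul (by positivity), Real.sqrt_sq hp.le, ht]
  have hp'eq : p' = p * t ^ 2 := by rw [ht2]; field_simp
  have hr : (p + d / 2) * s = p' + d / 2 := by
    rw [hs]
    field_simp
    linarith [hratio]
  rw [hdraw, hsqpp, hp'eq] at hr
  have hquad : t ^ 2 + (ν / 2) * (1 - s) * t = s := by
    apply mul_left_cancel₀ hpne
    linear_combination -hr
  have hu0 : 0 < t + (ν / 4) * (1 - s) := by nlinarith [sq_nonneg t, mul_pos ht0 hs0]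
  have hsq : (ν ^ 2 / 16) * (s - 1) ^ 2 + s = (t + (ν / 4) * (1 - s)) ^ 2 := by
    linear_combination -hquad
  rw [φ, hsq, Real.sqrt_sq hu0.le]
  field_simp
  ring
end
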